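/- A permutation σ of length n belongs to the juxtaposition class Av(321|21) if and only if σ avoids all six of the patterns 4321, 32154, 42153, 52143, 43152, and 53142. -/
import Mathlib


/-- `σ` contains an occurrence of the pattern `π` using only positions in `S`. -/
def ContainsIn {n m : ℕ} (σ : Equiv.Perm (Fin n)) (π : Equiv.Perm (Fin m))
    (S : Set (Fin n)) : Prop :=
  ∃ f : Fin m → Fin n, StrictMono f ∧ (∀ s, f s ∈ S) ∧
    ∀ s t : Fin m, σ (f s) < σ (f t) ↔ π s < π t

/-- `σ` contains an occurrence of the pattern `π`. -/
def Contains {n m : ℕ} (σ : Equiv.Perm (Fin n)) (π : Equiv.Perm (Fin m)) : Prop :=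
  ContainsIn σ π Set.univ

/-- `σ` avoids the pattern `π`. -/
def Avoids {n m : ℕ} (σ : Equiv.Perm (Fin n)) (π : Equiv.Perm (Fin m)) : Prop :=
  ¬ Contains σ π

/-- `σ` lies in the juxtaposition class `Av(P|Q)`: positions split at some cut `k`
(`0 ≤ k ≤ n`), no occurrence of `P` within the first `k` positions and no occurrence
of `Q` within the remaining positions. -/
def JuxtAv {n p q : ℕ} (P : Equiv.Perm (Fin p)) (Q : Equiv.Perm (Fin q))
    (σ : Equiv.Perm (Fin n)) : Prop :=
  ∃ k ≤ n, ¬ ContainsIn σ P {i : Fin n | (i : ℕ) < k} ∧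
    ¬ ContainsIn σ Q {i : Fin n | k ≤ (i : ℕ)}

noncomputable def p321 : Equiv.Perm (Fin 3) :=
  Equiv.ofBijective (![2,1,0] : Fin 3 → Fin 3) (by decide)

noncomputable def p21 : Equiv.Perm (Fin 2) :=
  Equiv.ofBijective (![1,0] : Fin 2 → Fin 2) (by decide)

noncomputable def p4321 : Equiv.Perm (Fin 4) :=
  Equiv.ofBijective (![3,2,1,0] : Fin 4 → Fin 4) (by decide)

noncomputable def p32154 : Equiv.Perm (Fin 5) :=
  Equiv.ofBijective (![2,1,0,4,3] : Fin 5 → Fin 5) (by decide)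

noncomputable def p42153 : Equiv.Perm (Fin 5) :=
  Equiv.ofBijective (![3,1,0,4,2] : Fin 5 → Fin 5) (by decide)

noncomputable def p52143 : Equiv.Perm (Fin 5) :=
  Equiv.ofBijective (![4,1,0,3,2] : Fin 5 → Fin 5) (by decide)

noncomputable def p43152 : Equiv.Perm (Fin 5) :=
  Equiv.ofBijective (![3,2,0,4,1] : Fin 5 → Fin 5) (by decide)

noncomputable def p53142 : Equiv.Perm (Fin 5) :=
  Equiv.ofBijective (![4,2,0,3,1] : Fin 5 → Fin 5) (by decide)

section Helpers

variable {n : ℕ}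

lemma sm2 {a b : Fin n} (h1 : a < b) : StrictMono ![a,b] := by
  rw [Fin.strictMono_iff_lt_succ]; intro i; fin_cases i <;> simpa using h1

lemma sm3 {a b c : Fin n} (h1 : a < b) (h2 : b < c) : StrictMono ![a,b,c] := by
  rw [Fin.strictMono_iff_lt_succ]; intro i; fin_cases i <;> simpa using by assumption

lemma sm4 {a b c d : Fin n} (h1 : a < b) (h2 : b < c) (h3 : c < d) : StrictMono ![a,b,c,d] := by
  rw [Fin.strictMono_iff_lt_succ]; intro i; fin_cases i <;> simpa using by assumption

lemma sm5 {a b c d e : Fin n} (h1 : a < b) (h2 : b < c) (h3 : c < d) (h4 : d < e) :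
    StrictMono ![a,b,c,d,e] := by
  rw [Fin.strictMono_iff_lt_succ]; intro i; fin_cases i <;> simpa using by assumption

lemma p321_coe : ⇑p321 = ![2,1,0] := rfl
lemma p21_coe : ⇑p21 = ![1,0] := rfl
lemma p4321_coe : ⇑p4321 = ![3,2,1,0] := rfl
lemma p32154_coe : ⇑p32154 = ![2,1,0,4,3] := rfl
lemma p42153_coe : ⇑p42153 = ![3,1,0,4,2] := rfl
lemma p52143_coe : ⇑p52143 = ![4,1,0,3,2] := rfl
lemma p43152_coe : ⇑p43152 = ![3,2,0,4,1] := rfl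
lemma p53142_coe : ⇑p53142 = ![4,2,0,3,1] := rfl

/-- A permutation in `Av(321|21)` avoids any 5-pattern that starts with a
descending triple and ends with a descending pair. -/
lemma forward5 (σ : Equiv.Perm (Fin n)) {π : Equiv.Perm (Fin 5)} {k : ℕ}
    (hv1 : π 1 < π 0) (hv2 : π 2 < π 1) (hv3 : π 4 < π 3)
    (hP : ¬ ContainsIn σ p321 {i : Fin n | (i : ℕ) < k})
    (hQ : ¬ ContainsIn σ p21 {i : Fin n | k ≤ (i : ℕ)}) :
    Avoids σ π := by
  rintro ⟨f, hf, -, hiff⟩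
  have h01 : (f 0).val < f 1 := hf (show (0:Fin 5) < 1 by decide)
  have h12 : (f 1).val < f 2 := hf (show (1:Fin 5) < 2 by decide)
  have h23 : (f 2).val < f 3 := hf (show (2:Fin 5) < 3 by decide)
  have h34 : (f 3).val < f 4 := hf (show (3:Fin 5) < 4 by decide)
  have v10 : (σ (f 1)).val < σ (f 0) := (hiff 1 0).mpr hv1
  have v21 : (σ (f 2)).val < σ (f 1) := (hiff 2 1).mpr hv2
  have v43 : (σ (f 4)).val < σ (f 3) := (hiff 4 3).mpr hv3
  by_cases hk : (f 2).val < k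
  · refine hP ⟨![f 0, f 1, f 2], sm3 (by exact h01) (by exact h12), ?_, ?_⟩
    · simp only [Fin.forall_fin_succ, Fin.forall_fin_one, IsEmpty.forall_iff, and_true, true_and, Matrix.cons_val_zero,
        Matrix.cons_val_succ, Set.mem_setOf_eq]
      omega
    · simp only [Fin.forall_fin_succ, Fin.forall_fin_one, IsEmpty.forall_iff, and_true, true_and, Matrix.cons_val_zero,
        Matrix.cons_val_succ, p321_coe, Fin.lt_def]
      norm_num
      omega
  · refine hQ ⟨![f 3, f 4], sm2 (by exact h34), ?_, ?_⟩
    · simp only [Fin.forall_fin_succ, Fin.forall_fin_one, IsEmpty.forall_iff, and_true, true_and, Matrix.cons_val_zero,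
        Matrix.cons_val_succ, Set.mem_setOf_eq]
      omega
    · simp only [Fin.forall_fin_succ, Fin.forall_fin_one, IsEmpty.forall_iff, and_true, true_and, Matrix.cons_val_zero,
        Matrix.cons_val_succ, p21_coe, Fin.lt_def]
      norm_num
      omega

lemma forward4 (σ : Equiv.Perm (Fin n)) {k : ℕ}
    (hP : ¬ ContainsIn σ p321 {i : Fin n | (i : ℕ) < k})
    (hQ : ¬ ContainsIn σ p21 {i : Fin n | k ≤ (i : ℕ)}) :
    Avoids σ p4321 := by
  rintro ⟨f, hf, -, hiff⟩
  have h01 : (f 0).val < f 1 := hf (show (0:Fin 4) < 1 by decide)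
  have h12 : (f 1).val < f 2 := hf (show (1:Fin 4) < 2 by decide)
  have h23 : (f 2).val < f 3 := hf (show (2:Fin 4) < 3 by decide)
  have v10 : (σ (f 1)).val < σ (f 0) := (hiff 1 0).mpr (by decide)
  have v21 : (σ (f 2)).val < σ (f 1) := (hiff 2 1).mpr (by decide)
  have v32 : (σ (f 3)).val < σ (f 2) := (hiff 3 2).mpr (by decide)
  by_cases hk : (f 2).val < k
  · refine hP ⟨![f 0, f 1, f 2], sm3 (by exact h01) (by exact h12), ?_, ?_⟩
    · simp only [Fin.forall_fin_succ, Fin.forall_fin_one, IsEmpty.forall_iff, and_true, true_and, Matrix.cons_val_zero,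
        Matrix.cons_val_succ, Set.mem_setOf_eq]
      omega
    · simp only [Fin.forall_fin_succ, Fin.forall_fin_one, IsEmpty.forall_iff, and_true, true_and, Matrix.cons_val_zero,
        Matrix.cons_val_succ, p321_coe, Fin.lt_def]
      norm_num
      omega
  · refine hQ ⟨![f 2, f 3], sm2 (by exact h23), ?_, ?_⟩
    · simp only [Fin.forall_fin_succ, Fin.forall_fin_one, IsEmpty.forall_iff, and_true, true_and, Matrix.cons_val_zero,
        Matrix.cons_val_succ, Set.mem_setOf_eq]
      omega
    · simp only [Fin.forall_fin_succ, Fin.forall_fin_one, IsEmpty.forall_iff, and_true, true_and, Matrix.cons_val_zero,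
        Matrix.cons_val_succ, p21_coe, Fin.lt_def]
      norm_num
      omega

end Helpers

theorem stmt {n : ℕ} (σ : Equiv.Perm (Fin n)) :
    JuxtAv p321 p21 σ ↔ Avoids σ p4321 ∧ Avoids σ p32154 ∧ Avoids σ p42153 ∧ Avoids σ p52143 ∧ Avoids σ p43152 ∧ Avoids σ p53142 := by
  constructor
  · rintro ⟨k, -, hP, hQ⟩
    exact ⟨forward4 σ hP hQ,
      forward5 σ (by decide) (by decide) (by decide) hP hQ,
      forward5 σ (by decide) (by decide) (by decide) hP hQ,
      forward5 σ (by decide) (by decide) (by decide) hP hQ,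
      forward5 σ (by decide) (by decide) (by decide) hP hQ,
      forward5 σ (by decide) (by decide) (by decide) hP hQ⟩
  · rintro ⟨h1, h2, h3, h4, h5, h6⟩
    classical
    set P : ℕ → Prop := fun k => ¬ ContainsIn σ p321 {i : Fin n | (i : ℕ) < k} with hPdef
    have hP0 : P 0 := by
      rintro ⟨g, -, hmem, -⟩
      exact absurd (hmem 0) (by simp)
    set K := Nat.findGreatest P n with hK
    have hKn : K ≤ n := Nat.findGreatest_le n
    have hPK : P K := Nat.findGreatest_spec (Nat.zero_le n) hP0
    refine ⟨K, hKn, hPK, ?_⟩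
    rintro ⟨h, hhm, hhmem, hhiff⟩
    -- d < e is a descent in the suffix
    have hde : (h 0).val < h 1 := hhm (show (0:Fin 2) < 1 by decide)
    have hKd : K ≤ (h 0).val := hhmem 0
    have hED : (σ (h 1)).val < σ (h 0) := (hhiff 1 0).mpr (by decide)
    have hKlt : K < n := lt_of_le_of_lt hKd (h 0).isLt
    have hPK1 : ¬ P (K + 1) :=
      Nat.findGreatest_is_greatest (Nat.lt_succ_self K) hKlt
    obtain ⟨g, hgm, hgmem, hgiff⟩ := not_not.mp hPK1
    have hab : (g 0).val < g 1 := hgm (show (0:Fin 3) < 1 by decide)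
    have hbc : (g 1).val < g 2 := hgm (show (1:Fin 3) < 2 by decide)
    have hBA : (σ (g 1)).val < σ (g 0) := (hgiff 1 0).mpr (by decide)
    have hCB : (σ (g 2)).val < σ (g 1) := (hgiff 2 1).mpr (by decide)
    have hcK1 : (g 2).val < K + 1 := hgmem 2
    -- in fact g 2 sits exactly at position K
    have hcK : (g 2).val = K := by
      by_contra hne
      refine hPK ⟨g, hgm, ?_, hgiff⟩
      have hlt : (g 2).val < K := by omega
      intro s
      have hs2 : (g s).val ≤ (g 2).val := by
        rcases Fin.le_last s |>.lt_or_eq with hs | hs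
        · exact le_of_lt (hgm (show s < 2 from hs))
        · rw [show s = 2 from hs]
      exact Set.mem_setOf_eq ▸ lt_of_le_of_lt hs2 hlt
    set a := g 0; set b := g 1; set c := g 2; set d := h 0; set e := h 1
    rcases eq_or_lt_of_le (show (c).val ≤ (d).val from hcK ▸ hKd) with hcd | hcd
    · -- d = c : pattern 4321 on a,b,c,e
      have hdc : d = c := Fin.ext hcd.symm
      have hce : (c).val < (e).val := hcd ▸ hde
      have hEC : (σ e).val < σ c := by rw [← hdc]; exact hED
      refine h1 ⟨![a,b,c,e], sm4 (by exact hab) (by exact hbc) (by exact hce),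
        fun s => Set.mem_univ _, ?_⟩
      simp only [Fin.forall_fin_succ, Fin.forall_fin_one, IsEmpty.forall_iff, and_true, true_and, Matrix.cons_val_zero,
        Matrix.cons_val_succ, p4321_coe, Fin.lt_def]
      norm_num
      omega
    · -- c < d < e : five points
      have hinj : ∀ x y : Fin n, x.val ≠ y.val → (σ x).val ≠ (σ y).val := by
        intro x y hxy hσ
        exact hxy (congrArg Fin.val (σ.injective (Fin.ext hσ)))
      have hce : (c).val < (e).val := lt_trans hcd hde
      have hCD : (σ c).val ≠ σ d := hinj _ _ (by omega)
      have hCE : (σ c).val ≠ σ e := hinj _ _ (by omega)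
      have hBD : (σ b).val ≠ σ d := hinj _ _ (by omega)
      have hBE : (σ b).val ≠ σ e := hinj _ _ (by omega)
      have hAD : (σ a).val ≠ σ d := hinj _ _ (by omega)
      have hAE : (σ a).val ≠ σ e := hinj _ _ (by omega)
      by_cases hec : (σ e).val < σ c
      · -- 4321 on a,b,c,e
        refine h1 ⟨![a,b,c,e], sm4 (by exact hab) (by exact hbc) (by exact hce),
          fun s => Set.mem_univ _, ?_⟩
        simp only [Fin.forall_fin_succ, Fin.forall_fin_one, IsEmpty.forall_iff, and_true, true_and, Matrix.cons_val_zero,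
          Matrix.cons_val_succ, p4321_coe, Fin.lt_def]
        norm_num
        omega
      · have hec' : (σ c).val < σ e := by omega
        by_cases hae : (σ a).val < σ e
        · -- C < B < A < E < D : 32154
          refine h2 ⟨![a,b,c,d,e], sm5 (by exact hab) (by exact hbc) (by exact hcd)
            (by exact hde), fun s => Set.mem_univ _, ?_⟩
          simp only [Fin.forall_fin_succ, Fin.forall_fin_one, IsEmpty.forall_iff, and_true, true_and, Matrix.cons_val_zero,
            Matrix.cons_val_succ, p32154_coe, Fin.lt_def]
          norm_num
          omega
        · have hea : (σ e).val < σ a := by omega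
          by_cases heb : (σ e).val < σ b
          · by_cases hdb : (σ d).val < σ b
            · -- 4321 on a,b,d,e
              refine h1 ⟨![a,b,d,e], sm4 (by exact hab) (by exact lt_trans hbc hcd)
                (by exact hde), fun s => Set.mem_univ _, ?_⟩
              simp only [Fin.forall_fin_succ, Fin.forall_fin_one, IsEmpty.forall_iff, and_true, true_and, Matrix.cons_val_zero,
                Matrix.cons_val_succ, p4321_coe, Fin.lt_def]
              norm_num
              omega
            · have hbd : (σ b).val < σ d := by omega
              by_cases hda : (σ d).val < σ a
              · -- C < E < B < D < A : 53142
                refine h6 ⟨![a,b,c,d,e], sm5 (by exact hab) (by exact hbc) (by exact hcd)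
                  (by exact hde), fun s => Set.mem_univ _, ?_⟩
                simp only [Fin.forall_fin_succ, Fin.forall_fin_one, IsEmpty.forall_iff, and_true, true_and, Matrix.cons_val_zero,
                  Matrix.cons_val_succ, p53142_coe, Fin.lt_def]
                norm_num
                omega
              · -- C < E < B < A < D : 43152
                have had : (σ a).val < σ d := by omega
                refine h5 ⟨![a,b,c,d,e], sm5 (by exact hab) (by exact hbc) (by exact hcd)
                  (by exact hde), fun s => Set.mem_univ _, ?_⟩
                simp only [Fin.forall_fin_succ, Fin.forall_fin_one, IsEmpty.forall_iff, and_true, true_and, Matrix.cons_val_zero,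
                  Matrix.cons_val_succ, p43152_coe, Fin.lt_def]
                norm_num
                omega
          · have hbe : (σ b).val < σ e := by omega
            by_cases hda : (σ d).val < σ a
            · -- C < B < E < D < A : 52143
              refine h4 ⟨![a,b,c,d,e], sm5 (by exact hab) (by exact hbc) (by exact hcd)
                (by exact hde), fun s => Set.mem_univ _, ?_⟩
              simp only [Fin.forall_fin_succ, Fin.forall_fin_one, IsEmpty.forall_iff, and_true, true_and, Matrix.cons_val_zero,
                Matrix.cons_val_succ, p52143_coe, Fin.lt_def]
              norm_num
              omega
            · -- C < B < E < A < D : 42153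
              have had : (σ a).val < σ d := by omega
              refine h3 ⟨![a,b,c,d,e], sm5 (by exact hab) (by exact hbc) (by exact hcd)
                (by exact hde), fun s => Set.mem_univ _, ?_⟩
              simp only [Fin.forall_fin_succ, Fin.forall_fin_one, IsEmpty.forall_iff, and_true, true_and, Matrix.cons_val_zero,
                Matrix.cons_val_succ, p42153_coe, Fin.lt_def]
              norm_num
              omega
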